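/- Let p ≥ 1 and a, b ≥ 0 be real numbers. Then 0 ≤ (a+b)^{p+1}/(p+1) − a^{p+1}/(p+1) − a^p b ≤ (p/2) · b² · (a+b)^{p−1}. -/

import Mathlib

/-!
Both bounds compare derivatives in `b`. With `F t = (a + t) ^ (p + 1) / (p + 1)`, the middle
quantity is `F b - F 0 - a ^ p * b`, and `F' t = (a + t) ^ p`. The lower bound follows from
`a ^ p ≤ (a + t) ^ p`. For the upper bound, the tangent line of the convex function `x ^ p` at
`a + t` gives `(a + t) ^ p - a ^ p ≤ p t (a + t) ^ (p - 1) ≤ p t (a + b) ^ (p - 1)`, the derivative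
of `(p / 2) t ² (a + b) ^ (p - 1)`.
-/

open Set

lemma Real.rpow_sub_rpow_le_mul_rpow_sub_one_mul {q x y : ℝ} (hq : 1 ≤ q) (hx : 0 ≤ x)
    (hy : 0 ≤ y) : y ^ q - x ^ q ≤ q * y ^ (q - 1) * (y - x) := by
  rcases hq.eq_or_lt with rfl | hq'
  · simp
  rcases hy.eq_or_lt with rfl | hy
  · rw [Real.zero_rpow (by linarith), Real.zero_rpow (by linarith)]
    linarith [Real.rpow_nonneg hx q]
  · have hs : -1 ≤ x / y - 1 := by linarith [div_nonneg hx hy.le]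
    have bernoulli := one_add_mul_self_le_rpow_one_add hs hq
    rw [add_sub_cancel, Real.div_rpow hx hy.le, le_div_iff₀ (Real.rpow_pos_of_pos hy q)]
      at bernoulli
    have key : (y + q * (x - y)) * y ^ q ≤ x ^ q * y := by
      calc (y + q * (x - y)) * y ^ q = (1 + q * (x / y - 1)) * y ^ q * y := by field_simp
        _ ≤ x ^ q * y := mul_le_mul_of_nonneg_right bernoulli hy.le
    rw [Real.rpow_sub_one hy.ne' q]
    field_simp
    linarith

lemma sub_le_sub_of_hasDerivAt_le {f g f' g' : ℝ → ℝ} {a b : ℝ} (hab : a ≤ b)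
    (hf : ∀ t ∈ Icc a b, HasDerivAt f (f' t) t) (hg : ∀ t ∈ Icc a b, HasDerivAt g (g' t) t)
    (hle : ∀ t ∈ Ioo a b, f' t ≤ g' t) : f b - f a ≤ g b - g a := by
  have hmono : MonotoneOn (fun t => g t - f t) (Icc a b) := by
    refine monotoneOn_of_hasDerivWithinAt_nonneg (f' := fun t => g' t - f' t) (convex_Icc a b)
      (fun t ht => ((hg t ht).sub (hf t ht)).continuousAt.continuousWithinAt) (fun t ht => ?_)
      (fun t ht => ?_)
    · rw [interior_Icc] at ht
      exact ((hg t (Ioo_subset_Icc_self ht)).sub (hf t (Ioo_subset_Icc_self ht))).hasDerivWithinAt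
    · rw [interior_Icc] at ht
      exact sub_nonneg.mpr (hle t ht)
  have := hmono (left_mem_Icc.mpr hab) (right_mem_Icc.mpr hab) hab
  simp only at this
  linarith

lemma hasDerivAt_add_rpow_add_one_div {p : ℝ} (hp : 0 ≤ p) (a t : ℝ) :
    HasDerivAt (fun s => (a + s) ^ (p + 1) / (p + 1)) ((a + t) ^ p) t := by
  have := (((hasDerivAt_id t).const_add a).rpow_const
    (Or.inr (by linarith : (1 : ℝ) ≤ p + 1))).div_const (p + 1)
  refine this.congr_deriv ?_
  rw [add_sub_cancel_right, id]
  field_simp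

theorem stmt_4 (p a b : ℝ) (hp : 1 ≤ p) (ha : 0 ≤ a) (hb : 0 ≤ b) :
    0 ≤ (a + b) ^ (p + 1) / (p + 1) - a ^ (p + 1) / (p + 1) - a ^ p * b ∧
    (a + b) ^ (p + 1) / (p + 1) - a ^ (p + 1) / (p + 1) - a ^ p * b ≤
      (p / 2) * b ^ 2 * (a + b) ^ (p - 1) := by
  have hF := fun t (_ : t ∈ Icc 0 b) => hasDerivAt_add_rpow_add_one_div (p := p) (by linarith) a t
  constructor
  · have := sub_le_sub_of_hasDerivAt_le hb
      (fun t _ => (hasDerivAt_id t).const_mul (a ^ p)) hF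
      (fun t ht => by
        rw [mul_one]
        exact Real.rpow_le_rpow ha (le_add_of_nonneg_right ht.1.le) (by linarith))
    simp only [add_zero, mul_zero, sub_zero, id] at this
    linarith
  · have := sub_le_sub_of_hasDerivAt_le hb
      (fun t ht => (hF t ht).sub ((hasDerivAt_id t).const_mul (a ^ p)))
      (fun t _ => (((hasDerivAt_pow 2 t).const_mul (p / 2)).mul_const ((a + b) ^ (p - 1))))
      (fun t ht => ?_)
    · simp only [Pi.sub_apply, add_zero, mul_zero, sub_zero, id, zero_pow two_ne_zero,
        zero_mul] at this
      linarith
    · obtain ⟨ht0, htb⟩ := ht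
      have growth : (a + t) ^ (p - 1) ≤ (a + b) ^ (p - 1) :=
        Real.rpow_le_rpow (by linarith) (by linarith) (by linarith)
      calc (a + t) ^ p - a ^ p * 1 ≤ p * (a + t) ^ (p - 1) * (a + t - a) := by
            rw [mul_one]
            exact Real.rpow_sub_rpow_le_mul_rpow_sub_one_mul hp ha (by linarith)
        _ ≤ p * (a + b) ^ (p - 1) * t := by
            rw [add_sub_cancel_left]
            gcongr
        _ = p / 2 * (2 * t ^ (2 - 1)) * (a + b) ^ (p - 1) := by ring
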